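/- arXiv:2309.03881 — 2 statements merged into one kernel-verified Lean document; each statement's English description precedes it below -/
import Mathlib

section
/- Let G be a non-trivial finite group such that meo(G) ≤ [G : M] for every proper subgroup M of G (equivalently, meo(G) ≤ m(G), where m(G) is the minimum index of a proper subgroup). Then for every proper subgroup H of G, ψ(H) < |G|. -/
noncomputable def psi (G : Type*) [Group G] [Finite G] : ℕ :=
  let _ := Fintype.ofFinite G
  ∑ g : G, orderOf g

noncomputable def meo (G : Type*) [Group G] [Finite G] : ℕ :=
  let _ := Fintype.ofFinite G
  Finset.univ.sup (orderOf : G → ℕ)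

noncomputable def minIndex (G : Type*) [Group G] : ℕ :=
  sInf {n | ∃ M : Subgroup G, M ≠ ⊤ ∧ M.index = n}

theorem meoGroup_is_Bpsi (G : Type*) [Group G] [Finite G] [Nontrivial G]
    (h : ∀ M : Subgroup G, M ≠ ⊤ → meo G ≤ M.index) :
    ∀ H : Subgroup G, H ≠ ⊤ → psi H < Nat.card G := by
  intro H hH
  letI hFG : Fintype G := Fintype.ofFinite G
  letI hFH : Fintype H := Fintype.ofFinite H
  have hmeo : meo G ≤ H.index := h H hH
  have hidx2 : 2 ≤ H.index := by
    have h0 : H.index ≠ 0 := Subgroup.index_ne_zero_of_finite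
    have h1 : H.index ≠ 1 := fun e => hH (Subgroup.index_eq_one.mp e)
    omega
  have hle : ∀ g : H, orderOf g ≤ H.index := by
    intro g
    have : orderOf (g : G) ≤ meo G := by
      simpa [meo] using Finset.le_sup (f := (orderOf : G → ℕ)) (Finset.mem_univ (g : G))
    rw [Subgroup.orderOf_coe] at this
    exact this.trans hmeo
  have hlt : psi H < Fintype.card H * H.index := by
    have : ∑ g : H, orderOf g < ∑ _g : H, H.index :=
      Finset.sum_lt_sum (fun g _ => hle g)
        ⟨(1 : H), Finset.mem_univ _, by simpa using (show 1 < H.index by omega)⟩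
    simpa [psi, Finset.sum_const, Finset.card_univ, mul_comm] using this
  have hcard : Fintype.card H * H.index = Nat.card G := by
    rw [← Nat.card_eq_fintype_card]; exact H.card_mul_index
  omega
end

section
/- The alternating group Alt(6) satisfies meo(Alt(6)) = 5 and every proper subgroup of Alt(6) has index at least 6; hence Alt(6) is a B_ψ-group, i.e., ψ(H) < 360 for every proper subgroup H. -/
open Equiv Equiv.Perm Subgroup

set_option maxRecDepth 8000

local notation "A6" => alternatingGroup (Fin 6)

private def pc (l : List (Fin 6)) : Perm (Fin 6) := l.formPerm

private lemma ldisj {l l' : List (Fin 6)} (h : ∀ a : Fin 6, ¬(a ∈ l ∧ a ∈ l')) :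
    l.Disjoint l' := fun _ ha hb => h _ ⟨ha, hb⟩

/-- Classification of cycle types of nontrivial even permutations of 6 points. -/
private lemma classify {f : Perm (Fin 6)} (hs : Perm.sign f = 1) (h1 : f ≠ 1) :
    f.cycleType = {3} ∨ f.cycleType = {2, 2} ∨ f.cycleType = {5} ∨
      f.cycleType = {2, 4} ∨ f.cycleType = {3, 3} := by
  have hsum : f.cycleType.sum ≤ 6 := by
    rw [sum_cycleType]
    simpa using f.support.card_le_univ
  have h2 : ∀ n ∈ f.cycleType, 2 ≤ n := fun n hn => two_le_of_mem_cycleType hn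
  have heven : Even (f.cycleType.sum + Multiset.card f.cycleType) := by
    rw [sign_of_cycleType] at hs
    exact (neg_one_pow_eq_one_iff_even (by decide)).1 hs
  have hcard2 : 2 * Multiset.card f.cycleType ≤ f.cycleType.sum := by
    simpa [mul_comm] using Multiset.card_nsmul_le_sum h2
  have hc0 : Multiset.card f.cycleType ≠ 0 := fun h => h1 (card_cycleType_eq_zero.1 h)
  rcases Nat.lt_or_ge (Multiset.card f.cycleType) 2 with h | h
  · -- card = 1
    have hcc : Multiset.card f.cycleType = 1 := by omega
    obtain ⟨n, hn⟩ := Multiset.card_eq_one.1 hcc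
    have h2n : 2 ≤ n := h2 n (by rw [hn]; exact Multiset.mem_singleton_self n)
    have hsn : n ≤ 6 := by rw [hn] at hsum; simpa using hsum
    have he : (n + 1) % 2 = 0 := by
      rw [hn] at heven; rw [← Nat.even_iff]; simpa using heven
    rw [hn]
    interval_cases n <;> first | omega | decide
  rcases Nat.lt_or_ge (Multiset.card f.cycleType) 3 with h' | h'
  · -- card = 2
    have hcc : Multiset.card f.cycleType = 2 := by omega
    obtain ⟨a, b, hab⟩ := Multiset.card_eq_two.1 hcc
    have h2a : 2 ≤ a := h2 a (by rw [hab]; simp)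
    have h2b : 2 ≤ b := h2 b (by rw [hab]; simp)
    have hsab : a + b ≤ 6 := by rw [hab] at hsum; simpa using hsum
    have he : (a + b) % 2 = 0 := by
      rw [hab] at heven
      have h3 : Even (a + b + 2) := by simpa [add_assoc, add_comm, add_left_comm] using heven
      rw [Nat.even_iff] at h3
      omega
    rw [hab]
    have ha4 : a ≤ 4 := by omega
    have hb4 : b ≤ 4 := by omega
    interval_cases a <;> interval_cases b <;> first | omega | decide
  · -- card = 3
    have hcc : Multiset.card f.cycleType = 3 := by omega
    obtain ⟨a, b, c, habc⟩ := Multiset.card_eq_three.1 hcc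
    have h2a : 2 ≤ a := h2 a (by rw [habc]; simp)
    have h2b : 2 ≤ b := h2 b (by rw [habc]; simp)
    have h2c : 2 ≤ c := h2 c (by rw [habc]; simp)
    have hsab : a + b + c ≤ 6 := by
      rw [habc] at hsum; simpa [add_assoc] using hsum
    have he : Even (a + b + c + 3) := by
      rw [habc] at heven
      simpa [add_assoc, add_comm, add_left_comm] using heven
    rw [Nat.even_iff] at he
    omega

private lemma orderOf_le_five {f : Perm (Fin 6)} (hs : Perm.sign f = 1) : orderOf f ≤ 5 := by
  by_cases h1 : f = 1
  · subst h1; simp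
  have hl := lcm_cycleType f
  rcases classify hs h1 with h | h | h | h | h <;> rw [h] at hl <;> rw [← hl] <;> decide

private lemma comm_mem (N : Subgroup A6) [hN : N.Normal] {x : A6} (t : A6) (hx : x ∈ N) :
    x * t * x⁻¹ * t⁻¹ ∈ N := by
  have h1 : t * x⁻¹ * t⁻¹ ∈ N := hN.conj_mem _ (inv_mem hx) t
  have h2 := mul_mem hx h1
  simpa [mul_assoc] using h2

private lemma top_of_threeCycle (N : Subgroup A6) [N.Normal] (y : A6) (hy : y ∈ N)
    (h3 : IsThreeCycle (y : Perm (Fin 6))) : N = ⊤ := by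
  have h5 : 5 ≤ Nat.card (Fin 6) := by simp
  have hcl := h3.alternating_normalClosure h5
  have hyy : (⟨(y : Perm (Fin 6)), h3.mem_alternatingGroup⟩ : A6) = y := Subtype.ext rfl
  rw [hyy] at hcl
  refine eq_top_iff.2 ?_
  rw [← hcl]
  exact normalClosure_le_normal (Set.singleton_subset_iff.2 hy)

private lemma rep_mem (N : Subgroup A6) [hN : N.Normal] {f r : Perm (Fin 6)}
    (hf : f ∈ alternatingGroup (Fin 6)) (hr : r ∈ alternatingGroup (Fin 6))
    (hx : (⟨f, hf⟩ : A6) ∈ N) (π : Perm (Fin 6)) (hπ : Perm.sign π = 1)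
    (hc : π * r * π⁻¹ = f) : (⟨r, hr⟩ : A6) ∈ N := by
  set p : A6 := ⟨π, mem_alternatingGroup.2 hπ⟩ with hp
  have h1 : p⁻¹ * ⟨f, hf⟩ * p ∈ N := by
    have := hN.conj_mem _ hx p⁻¹
    simpa using this
  have h2 : p⁻¹ * (⟨f, hf⟩ : A6) * p = ⟨r, hr⟩ := by
    apply Subtype.ext
    show π⁻¹ * f * π = r
    rw [← hc]; group
  rwa [h2] at h1

private lemma even_conj {f r r' t : Perm (Fin 6)} (hc : IsConj r f) (ht : Perm.sign t = -1)
    (htr : t * r' * t⁻¹ = r) :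
    (∃ π, Perm.sign π = 1 ∧ π * r * π⁻¹ = f) ∨
      (∃ π, Perm.sign π = 1 ∧ π * r' * π⁻¹ = f) := by
  obtain ⟨π, hπ⟩ := isConj_iff.1 hc
  cases' Int.units_eq_one_or (Perm.sign π) with h h
  · exact Or.inl ⟨π, h, hπ⟩
  · refine Or.inr ⟨π * t, ?_, ?_⟩
    · rw [map_mul, h, ht]; decide
    · rw [← hπ, ← htr]; group

private lemma ct_cycle (l : List (Fin 6)) (h : l.Nodup) (h2 : 2 ≤ l.length) :
    (pc l).cycleType = {(pc l).support.card} := by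
  exact (List.isCycle_formPerm h h2).cycleType

/-- One commutator step: if the representative is in `N` and its commutator with `τ`
is a three-cycle, then `N = ⊤`. -/
private lemma finish_one (N : Subgroup A6) [N.Normal] {r τ : Perm (Fin 6)}
    (hr : r ∈ alternatingGroup (Fin 6)) (hτ : τ ∈ alternatingGroup (Fin 6))
    (hrN : (⟨r, hr⟩ : A6) ∈ N)
    (h3 : (r * τ * r⁻¹ * τ⁻¹).support.card = 3) : N = ⊤ := by
  have hm := comm_mem N (⟨τ, hτ⟩ : A6) hrN
  refine top_of_threeCycle N _ hm ?_
  exact card_support_eq_three_iff.1 h3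

private lemma finish_two (N : Subgroup A6) [N.Normal] {r τ : Perm (Fin 6)}
    (hr : r ∈ alternatingGroup (Fin 6)) (hτ : τ ∈ alternatingGroup (Fin 6))
    (hrN : (⟨r, hr⟩ : A6) ∈ N)
    (h3 : ((r * τ * r⁻¹ * τ⁻¹) * τ * (r * τ * r⁻¹ * τ⁻¹)⁻¹ * τ⁻¹).support.card = 3) :
    N = ⊤ := by
  have hm := comm_mem N (⟨τ, hτ⟩ : A6) hrN
  have hm2 := comm_mem N (⟨τ, hτ⟩ : A6) hm
  refine top_of_threeCycle N _ hm2 ?_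
  exact card_support_eq_three_iff.1 h3

private lemma normal_top (N : Subgroup A6) (hN : N.Normal) (hb : N ≠ ⊥) : N = ⊤ := by
  haveI := hN
  rw [Ne, Subgroup.eq_bot_iff_forall] at hb
  push_neg at hb
  obtain ⟨x, hxN, hx1⟩ := hb
  have hf : (x : Perm (Fin 6)) ∈ alternatingGroup (Fin 6) := x.2
  have hxf : (⟨(x : Perm (Fin 6)), hf⟩ : A6) = x := Subtype.ext rfl
  have hxN' : (⟨(x : Perm (Fin 6)), hf⟩ : A6) ∈ N := by rw [hxf]; exact hxN
  have hsgn : Perm.sign (x : Perm (Fin 6)) = 1 := mem_alternatingGroup.1 hf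
  have hf1 : (x : Perm (Fin 6)) ≠ 1 := fun h => hx1 (Subtype.ext h)
  rcases classify hsgn hf1 with h | h | h | h | h
  · -- three-cycle
    exact top_of_threeCycle N x hxN h
  · -- (2,2)
    have hct : (pc [0, 1] * pc [2, 3]).cycleType = ({2, 2} : Multiset ℕ) := by
      have hd : (pc [0, 1]).Disjoint (pc [2, 3]) :=
        (List.formPerm_disjoint_iff (by decide) (by decide) (by decide) (by decide)).2 (ldisj (by decide))
      rw [hd.cycleType_mul, ct_cycle [0, 1] (by decide) (by decide),
        ct_cycle [2, 3] (by decide) (by decide)]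
      decide
    have hc : IsConj (pc [0, 1] * pc [2, 3]) (x : Perm (Fin 6)) :=
      isConj_iff_cycleType_eq.2 (by rw [hct, h])
    have hrmem : pc [0, 1] * pc [2, 3] ∈ alternatingGroup (Fin 6) :=
      mem_alternatingGroup.2 (by decide)
    have hτ : pc [0, 1, 4] ∈ alternatingGroup (Fin 6) := mem_alternatingGroup.2 (by decide)
    rcases even_conj hc (t := swap 4 5) (r' := pc [0, 1] * pc [2, 3]) (by decide) (by decide) with
        ⟨π, h1, h2⟩ | ⟨π, h1, h2⟩ <;>
      exact finish_one N hrmem hτ (rep_mem N hf hrmem hxN' π h1 h2) (by decide)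
  · -- (5)
    have hct : (pc [0, 1, 2, 3, 4]).cycleType = ({5} : Multiset ℕ) := by
      rw [ct_cycle [0, 1, 2, 3, 4] (by decide) (by decide)]; decide
    have hc : IsConj (pc [0, 1, 2, 3, 4]) (x : Perm (Fin 6)) :=
      isConj_iff_cycleType_eq.2 (by rw [hct, h])
    have hrmem : pc [0, 1, 2, 3, 4] ∈ alternatingGroup (Fin 6) :=
      mem_alternatingGroup.2 (by decide)
    have hrmem' : pc [1, 0, 2, 3, 4] ∈ alternatingGroup (Fin 6) :=
      mem_alternatingGroup.2 (by decide)
    have hτ : pc [0, 1, 2] ∈ alternatingGroup (Fin 6) := mem_alternatingGroup.2 (by decide)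
    rcases even_conj hc (t := swap 0 1) (r' := pc [1, 0, 2, 3, 4]) (by decide) (by decide) with
      ⟨π, h1, h2⟩ | ⟨π, h1, h2⟩
    · exact finish_one N hrmem hτ (rep_mem N hf hrmem hxN' π h1 h2) (by decide)
    · exact finish_one N hrmem' hτ (rep_mem N hf hrmem' hxN' π h1 h2) (by decide)
  · -- (2,4)
    have hct : (pc [0, 1, 2, 3] * pc [4, 5]).cycleType = ({2, 4} : Multiset ℕ) := by
      have hd : (pc [0, 1, 2, 3]).Disjoint (pc [4, 5]) :=
        (List.formPerm_disjoint_iff (by decide) (by decide) (by decide) (by decide)).2 (ldisj (by decide))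
      rw [hd.cycleType_mul, ct_cycle [0, 1, 2, 3] (by decide) (by decide),
        ct_cycle [4, 5] (by decide) (by decide)]
      decide
    have hc : IsConj (pc [0, 1, 2, 3] * pc [4, 5]) (x : Perm (Fin 6)) :=
      isConj_iff_cycleType_eq.2 (by rw [hct, h])
    have hrmem : pc [0, 1, 2, 3] * pc [4, 5] ∈ alternatingGroup (Fin 6) :=
      mem_alternatingGroup.2 (by decide)
    have hτ : pc [0, 1, 2] ∈ alternatingGroup (Fin 6) := mem_alternatingGroup.2 (by decide)
    rcases even_conj hc (t := swap 4 5) (r' := pc [0, 1, 2, 3] * pc [4, 5]) (by decide) (by decide)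
        with ⟨π, h1, h2⟩ | ⟨π, h1, h2⟩ <;>
      exact finish_one N hrmem hτ (rep_mem N hf hrmem hxN' π h1 h2) (by decide)
  · -- (3,3)
    have hct : (pc [0, 1, 2] * pc [3, 4, 5]).cycleType = ({3, 3} : Multiset ℕ) := by
      have hd : (pc [0, 1, 2]).Disjoint (pc [3, 4, 5]) :=
        (List.formPerm_disjoint_iff (by decide) (by decide) (by decide) (by decide)).2 (ldisj (by decide))
      rw [hd.cycleType_mul, ct_cycle [0, 1, 2] (by decide) (by decide),
        ct_cycle [3, 4, 5] (by decide) (by decide)]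
      decide
    have hc : IsConj (pc [0, 1, 2] * pc [3, 4, 5]) (x : Perm (Fin 6)) :=
      isConj_iff_cycleType_eq.2 (by rw [hct, h])
    have hrmem : pc [0, 1, 2] * pc [3, 4, 5] ∈ alternatingGroup (Fin 6) :=
      mem_alternatingGroup.2 (by decide)
    have hτ : pc [0, 1, 3] ∈ alternatingGroup (Fin 6) := mem_alternatingGroup.2 (by decide)
    rcases even_conj hc (t := swap 0 3 * swap 1 4 * swap 2 5)
        (r' := pc [0, 1, 2] * pc [3, 4, 5]) (by decide) (by decide) with
        ⟨π, h1, h2⟩ | ⟨π, h1, h2⟩ <;>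
      exact finish_two N hrmem hτ (rep_mem N hf hrmem hxN' π h1 h2) (by decide)

private lemma card_A6 : Nat.card A6 = 360 := by
  have h2 := two_mul_card_alternatingGroup (α := Fin 6)
  rw [Fintype.card_perm, Fintype.card_fin] at h2
  have h6 : Nat.factorial 6 = 720 := by norm_num [Nat.factorial]
  rw [h6] at h2
  rw [Nat.card_eq_fintype_card]
  omega

private lemma index_ge_six (M : Subgroup A6) (hM : M ≠ ⊤) : 6 ≤ M.index := by
  by_contra hlt
  push_neg at hlt
  have hKn : M.normalCore.Normal := inferInstance
  have hKne : M.normalCore ≠ ⊤ := by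
    intro h
    exact hM (top_le_iff.1 (h ▸ M.normalCore_le))
  have hK : M.normalCore = ⊥ := by
    by_contra hb
    exact hKne (normal_top M.normalCore hKn hb)
  have hker : (MulAction.toPermHom A6 (A6 ⧸ M)).ker = ⊥ := by
    rw [← Subgroup.normalCore_eq_ker, hK]
  have hinj : Function.Injective (MulAction.toPermHom A6 (A6 ⧸ M)) :=
    (MonoidHom.ker_eq_bot_iff _).1 hker
  have hle : Nat.card A6 ≤ Nat.card (Perm (A6 ⧸ M)) :=
    Nat.card_le_card_of_injective _ hinj
  have hidx : Nat.card (A6 ⧸ M) = M.index := rfl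
  have hcardP : Nat.card (Perm (A6 ⧸ M)) = Nat.factorial M.index := by
    haveI : Fintype (A6 ⧸ M) := Fintype.ofFinite _
    haveI : DecidableEq (A6 ⧸ M) := Classical.decEq _
    have e1 : Nat.card (Perm (A6 ⧸ M)) = Fintype.card (Perm (A6 ⧸ M)) :=
      Nat.card_eq_fintype_card
    have e2 : Fintype.card (A6 ⧸ M) = M.index := by
      rw [← Nat.card_eq_fintype_card]; exact hidx
    rw [e1, Fintype.card_perm, e2]
  rw [card_A6, hcardP] at hle
  have hfact : Nat.factorial M.index ≤ Nat.factorial 5 := Nat.factorial_le (by omega)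
  have h120 : Nat.factorial 5 = 120 := by norm_num [Nat.factorial]
  omega

private lemma orderOf_coe_le_five (g : A6) : orderOf g ≤ 5 := by
  have h := orderOf_injective (alternatingGroup (Fin 6)).subtype Subtype.coe_injective g
  rw [← h]
  exact orderOf_le_five (mem_alternatingGroup.1 g.2)

theorem alt6_meo_and_Bpsi :
    meo (alternatingGroup (Fin 6)) = 5 ∧
    (∀ M : Subgroup (alternatingGroup (Fin 6)), M ≠ ⊤ → 6 ≤ M.index) ∧
    (∀ H : Subgroup (alternatingGroup (Fin 6)), H ≠ ⊤ → psi H < 360) := by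
  refine ⟨?_, index_ge_six, ?_⟩
  · -- meo = 5
    have key : ∀ (i : Fintype A6), (@Finset.univ _ i).sup (orderOf : A6 → ℕ) = 5 := by
      intro i
      refine le_antisymm (Finset.sup_le fun g _ => orderOf_coe_le_five g) ?_
      have hmem : pc [0, 1, 2, 3, 4] ∈ alternatingGroup (Fin 6) :=
        mem_alternatingGroup.2 (by decide)
      have ho : orderOf (pc [0, 1, 2, 3, 4]) = 5 := by
        show orderOf ([0, 1, 2, 3, 4] : List (Fin 6)).formPerm = 5
        rw [(List.isCycle_formPerm (l := ([0, 1, 2, 3, 4] : List (Fin 6)))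
          (by decide) (by decide)).orderOf]
        decide
      have ho' : orderOf (⟨pc [0, 1, 2, 3, 4], hmem⟩ : A6) = 5 := by
        rw [← orderOf_injective (alternatingGroup (Fin 6)).subtype Subtype.coe_injective]
        exact ho
      rw [← ho']
      exact Finset.le_sup (Finset.mem_univ _)
    exact key _
  · -- psi < 360
    intro H hH
    have hidx := index_ge_six H hH
    have hci : Nat.card H * H.index = 360 := by
      rw [H.card_mul_index, card_A6]
    have h6 : Nat.card H * 6 ≤ 360 := by
      calc Nat.card H * 6 ≤ Nat.card H * H.index := Nat.mul_le_mul_left _ hidx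
        _ = 360 := hci
    have hcH : Nat.card H ≤ 60 := by omega
    have key : ∀ (i : Fintype H), (@Finset.univ _ i).sum (fun g => orderOf g) < 360 := by
      intro i
      have hb : ∀ g ∈ (@Finset.univ _ i), orderOf g ≤ 5 := by
        intro g _
        have h1 := orderOf_injective H.subtype Subtype.coe_injective g
        rw [← h1]
        exact orderOf_coe_le_five (H.subtype g)
      have hsum := Finset.sum_le_card_nsmul (@Finset.univ _ i) (fun g => orderOf g) 5 hb
      have hcard : (@Finset.univ _ i).card = Nat.card H := by
        rw [Finset.card_univ, ← Nat.card_eq_fintype_card]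
      rw [hcard, smul_eq_mul] at hsum
      have : Nat.card ↥H * 5 ≤ 300 := by omega
      omega
    exact key _
end
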